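/- arXiv:2009.07204 — 6 statements merged into one kernel-verified Lean document; each statement's English description precedes it below -/
import Mathlib

section
/- If F : 𝔽₂ⁿ → 𝔽₂ⁿ is an APN function (n ≥ 1), then the cardinality of the image of F is at least ⌈2^{2n} / (3·2ⁿ − 2)⌉. -/
/-!
Count the collisions `F x = F y`. Grouping them by the common value `F x = b` and applying
Cauchy–Schwarz to the fibre sizes gives `(2ⁿ)² ≤ |Im F| · #collisions`. Grouping them instead by
the difference `a = y - x`, the shift `a = 0` contributes `2ⁿ` collisions, and for `a ≠ 0` they
are the solutions of `F x + F (x + a) = 0`, of which an APN function has at most two. Hence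
`#collisions ≤ 2ⁿ + 2 (2ⁿ - 1) = 3 · 2ⁿ - 2`.
-/

open Finset

/-- `F` is almost perfect nonlinear (APN). -/
def IsAPN {n : ℕ} (F : (Fin n → ZMod 2) → (Fin n → ZMod 2)) : Prop :=
  ∀ a : Fin n → ZMod 2, a ≠ 0 → ∀ b : Fin n → ZMod 2,
    (Finset.univ.filter fun x => F x + F (x + a) = b).card ≤ 2

section Collisions

variable {α β : Type*} [Fintype α] [DecidableEq β]

def collisionCount (F : α → β) : ℕ := #{p : α × α | F p.1 = F p.2}

lemma collisionCount_eq_sum_sq (F : α → β) :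
    collisionCount F = ∑ b ∈ univ.image F, #{x | F x = b} ^ 2 := by
  have maps_to : ∀ p ∈ (univ : Finset (α × α)).filter (fun p => F p.1 = F p.2),
      F p.1 ∈ univ.image F := fun p _ => mem_image_of_mem F (mem_univ _)
  rw [collisionCount, card_eq_sum_card_fiberwise maps_to]
  refine sum_congr rfl fun b _ => ?_
  rw [sq, ← card_product]
  congr 1
  ext ⟨x, y⟩
  simp only [mem_filter, mem_univ, true_and, mem_product]
  grind

lemma sq_card_le_card_range_mul_collisionCount (F : α → β) :
    Fintype.card α ^ 2 ≤ Nat.card (Set.range F) * collisionCount F :=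
  calc Fintype.card α ^ 2 = (∑ b ∈ univ.image F, #{x | F x = b}) ^ 2 := by
        rw [← card_eq_sum_card_image, card_univ]
    _ ≤ #(univ.image F) * ∑ b ∈ univ.image F, #{x | F x = b} ^ 2 := sq_sum_le_card_mul_sum_sq
    _ = Nat.card (Set.range F) * collisionCount F := by
        rw [collisionCount_eq_sum_sq, Nat.card_eq_card_toFinset, Set.toFinset_range]

end Collisions

section Shifts

variable {G β : Type*} [AddGroup G] [Fintype G] [DecidableEq β]

lemma collisionCount_eq_sum_card_shift (F : G → β) :
    collisionCount F = ∑ a, #{x | F x = F (x + a)} := by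
  simp only [collisionCount, card_filter, Fintype.sum_prod_type]
  conv_rhs => rw [sum_comm]
  exact sum_congr rfl fun x _ =>
    (Equiv.sum_comp (Equiv.addLeft x) fun y => if F x = F y then 1 else 0).symm

lemma collisionCount_le_of_card_shift_le (F : G → β) (k : ℕ)
    (hk : ∀ a ≠ 0, #{x | F x = F (x + a)} ≤ k) :
    collisionCount F ≤ Fintype.card G + (Fintype.card G - 1) * k := by
  classical
  rw [collisionCount_eq_sum_card_shift, ← add_sum_erase _ _ (mem_univ 0)]
  gcongr
  · simp
  · calc ∑ a ∈ univ.erase 0, #{x | F x = F (x + a)} ≤ #(univ.erase (0 : G)) • k :=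
          sum_le_card_nsmul _ _ _ fun a ha => hk a (ne_of_mem_erase ha)
      _ = (Fintype.card G - 1) * k := by rw [card_erase_of_mem (mem_univ _), card_univ, smul_eq_mul]

end Shifts

lemma IsAPN.card_shift_le_two {n : ℕ} {F : (Fin n → ZMod 2) → (Fin n → ZMod 2)} (hF : IsAPN F)
    {a : Fin n → ZMod 2} (ha : a ≠ 0) : #{x | F x = F (x + a)} ≤ 2 := by
  have char_two : ∀ u v : Fin n → ZMod 2, u + v = 0 ↔ u = v := fun u v => by
    rw [add_eq_zero_iff_eq_neg, show -v = v from funext fun i => ZMod.neg_eq_self_mod_two (v i)]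
  simpa only [char_two] using hF a ha 0

theorem apn_image_lower_bound_general {n : ℕ}
    (F : (Fin n → ZMod 2) → (Fin n → ZMod 2)) (hF : IsAPN F) :
    (2 ^ (2 * n) + (3 * 2 ^ n - 2) - 1) / (3 * 2 ^ n - 2) ≤ Nat.card (Set.range F) := by
  have hcard : Fintype.card (Fin n → ZMod 2) = 2 ^ n := by simp [ZMod.card]
  have hpos : 1 ≤ 2 ^ n := Nat.one_le_two_pow
  have hcoll : collisionCount F ≤ 3 * 2 ^ n - 2 := by
    have := collisionCount_le_of_card_shift_le F 2 fun a ha => hF.card_shift_le_two ha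
    omega
  rw [← Nat.ceilDiv_eq_add_pred_div, ceilDiv_le_iff_le_mul (by omega)]
  calc 2 ^ (2 * n) = Fintype.card (Fin n → ZMod 2) ^ 2 := by rw [hcard, ← pow_mul, mul_comm]
    _ ≤ Nat.card (Set.range F) * collisionCount F := sq_card_le_card_range_mul_collisionCount F
    _ ≤ (3 * 2 ^ n - 2) * Nat.card (Set.range F) := by rw [mul_comm]; gcongr

/-- an APN function on `𝔽₂ⁿ` (`n ≥ 1`) has image of size at least
`⌈2^(2n) / (3·2ⁿ − 2)⌉`. -/
theorem apn_image_lower_bound {n : ℕ} (hn : 1 ≤ n)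
    (F : (Fin n → ZMod 2) → (Fin n → ZMod 2)) (hF : IsAPN F) :
    (2 ^ (2 * n) + (3 * 2 ^ n - 2) - 1) / (3 * 2 ^ n - 2) ≤ Nat.card (Set.range F) :=
  apn_image_lower_bound_general F hF
end

section
/- For even n, ⌈2^{2n} / (3·2ⁿ − 2)⌉ = (2ⁿ + 2)/3, and for odd n, ⌈2^{2n} / (3·2ⁿ − 2)⌉ = (2ⁿ + 1)/3. -/
/-! Write `a = 2ⁿ`, so the divisor is `3a - 2` and `2ⁿ ≡ (-1)ⁿ (mod 3)`. If `a = 3k + 1`, then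
`a² = (k + 1)(9k + 1) - 4k`, and if `a = 3k + 2`, then `a² = (k + 1)(9k + 4) - k`; in both cases
`k(3a - 2) < a² ≤ (k + 1)(3a - 2)`, so the ceiling is `k + 1`. -/

namespace Nat

theorem two_pow_mod_three_of_even {n : ℕ} (hn : Even n) : 2 ^ n % 3 = 1 := by
  obtain ⟨m, rfl⟩ := hn
  rw [← two_mul, pow_mul, Nat.pow_mod]
  norm_num

theorem two_pow_mod_three_of_odd {n : ℕ} (hn : Odd n) : 2 ^ n % 3 = 2 := by
  obtain ⟨m, rfl⟩ := hn
  rw [pow_succ, pow_mul, Nat.mul_mod, Nat.pow_mod]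
  norm_num

theorem sq_add_pred_div_three_mul_sub_two_of_mod_three_eq_one {a : ℕ} (ha : a % 3 = 1) :
    (a ^ 2 + (3 * a - 2) - 1) / (3 * a - 2) = (a + 2) / 3 := by
  obtain ⟨k, rfl⟩ : ∃ k, a = 3 * k + 1 := ⟨a / 3, by omega⟩
  rw [show (3 * k + 1 + 2) / 3 = k + 1 by omega, show 3 * (3 * k + 1) - 2 = 9 * k + 1 by omega]
  apply Nat.div_eq_of_lt_le <;> ring_nf <;> omega

theorem sq_add_pred_div_three_mul_sub_two_of_mod_three_eq_two {a : ℕ} (ha : a % 3 = 2) :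
    (a ^ 2 + (3 * a - 2) - 1) / (3 * a - 2) = (a + 1) / 3 := by
  obtain ⟨k, rfl⟩ : ∃ k, a = 3 * k + 2 := ⟨a / 3, by omega⟩
  rw [show (3 * k + 2 + 1) / 3 = k + 1 by omega, show 3 * (3 * k + 2) - 2 = 9 * k + 4 by omega]
  apply Nat.div_eq_of_lt_le <;> ring_nf <;> omega

end Nat

theorem ceil_div_formula_general (n : ℕ) :
    (Even n → (2 ^ (2 * n) + (3 * 2 ^ n - 2) - 1) / (3 * 2 ^ n - 2) = (2 ^ n + 2) / 3) ∧
    (Odd n → (2 ^ (2 * n) + (3 * 2 ^ n - 2) - 1) / (3 * 2 ^ n - 2) = (2 ^ n + 1) / 3) := by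
  rw [pow_mul']
  exact ⟨fun he => Nat.sq_add_pred_div_three_mul_sub_two_of_mod_three_eq_one
      (Nat.two_pow_mod_three_of_even he),
    fun ho => Nat.sq_add_pred_div_three_mul_sub_two_of_mod_three_eq_two
      (Nat.two_pow_mod_three_of_odd ho)⟩

/-- For even positive `n`, `⌈2^(2n)/(3·2ⁿ−2)⌉ = (2ⁿ+2)/3`, and for odd `n`,
`⌈2^(2n)/(3·2ⁿ−2)⌉ = (2ⁿ+1)/3` (exact divisions). -/
theorem ceil_div_formula (n : ℕ) (hn : 1 ≤ n) :
    (Even n → (2 ^ (2 * n) + (3 * 2 ^ n - 2) - 1) / (3 * 2 ^ n - 2) = (2 ^ n + 2) / 3) ∧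
    (Odd n → (2 ^ (2 * n) + (3 * 2 ^ n - 2) - 1) / (3 * 2 ^ n - 2) = (2 ^ n + 1) / 3) :=
  ceil_div_formula_general n
end

section
/- Let F : 𝔽₂ⁿ → 𝔽₂ⁿ be APN and suppose F ∘ A = B ∘ F for invertible linear maps A, B where dim Fix(A) = k, dim Fix(B) = ℓ, and k = 2, ℓ = 0. Then a contradiction arises: no such APN F exists, because F restricted to Fix(A) would be constant equal to 0 on a 2-dimensional affine structure, violating APN-ness. -/
/-- The fixed-point space of a linear automorphism, as a submodule. -/
def fixSpace {n : ℕ} (A : (Fin n → ZMod 2) ≃ₗ[ZMod 2] (Fin n → ZMod 2)) :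
    Submodule (ZMod 2) (Fin n → ZMod 2) where
  carrier := {x | A x = x}
  add_mem' := by intro a b ha hb; simp only [Set.mem_setOf_eq, map_add] at *; rw [ha, hb]
  zero_mem' := by simp
  smul_mem' := by intro c x hx; simp only [Set.mem_setOf_eq, map_smul] at *; rw [hx]

variable {n : ℕ}

theorem mem_fixSpace_iff {A : (Fin n → ZMod 2) ≃ₗ[ZMod 2] (Fin n → ZMod 2)} {x : Fin n → ZMod 2} :
    x ∈ fixSpace A ↔ A x = x :=
  Iff.rfl

theorem map_mem_fixSpace_of_comm {F : (Fin n → ZMod 2) → (Fin n → ZMod 2)}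
    {A B : (Fin n → ZMod 2) ≃ₗ[ZMod 2] (Fin n → ZMod 2)} (h : ∀ x, F (A x) = B (F x))
    {x : Fin n → ZMod 2} (hx : x ∈ fixSpace A) : F x ∈ fixSpace B := by
  rw [mem_fixSpace_iff, ← h x, mem_fixSpace_iff.mp hx]

/-- In characteristic 2 the derivative `x ↦ F x + F (x + a)` in a direction `a ∈ V` vanishes on
all of `V`, so the APN bound caps `|V|` at 2. -/
theorem IsAPN.finrank_le_one_of_eqOn_const {F : (Fin n → ZMod 2) → (Fin n → ZMod 2)}
    (hF : IsAPN F) (V : Submodule (ZMod 2) (Fin n → ZMod 2)) (c : Fin n → ZMod 2)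
    (hc : ∀ x ∈ V, F x = c) : Module.finrank (ZMod 2) V ≤ 1 := by
  classical
  by_contra! hV
  have hne : V ≠ ⊥ := fun hbot => by rw [hbot, finrank_bot] at hV; omega
  obtain ⟨a, ha, ha0⟩ := Submodule.exists_mem_ne_zero_of_ne_bot hne
  have hsub : (V : Set (Fin n → ZMod 2)).toFinset ⊆
      Finset.univ.filter fun x => F x + F (x + a) = 0 := by
    intro x hx
    rw [Set.mem_toFinset] at hx
    simp only [Finset.mem_filter, Finset.mem_univ, true_and]
    rw [hc x hx, hc (x + a) (V.add_mem hx ha)]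
    exact funext fun i => CharTwo.add_self_eq_zero (c i)
  have hcard : 2 ^ Module.finrank (ZMod 2) V ≤ 2 := calc
    2 ^ Module.finrank (ZMod 2) V = Fintype.card V := by
      rw [Module.card_eq_pow_finrank (K := ZMod 2), ZMod.card]
    _ = (V : Set (Fin n → ZMod 2)).toFinset.card := by simp [Set.toFinset_card]
    _ ≤ _ := Finset.card_le_card hsub
    _ ≤ 2 := hF a ha0 0
  have : 2 ^ 2 ≤ 2 ^ Module.finrank (ZMod 2) V := Nat.pow_le_pow_right two_pos hV
  omega

/-- There is no APN function `F` with `F ∘ A = B ∘ F` where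
`dim Fix(A) = 2` and `dim Fix(B) = 0`. -/
theorem no_apn_fix_two_zero {n : ℕ}
    (F : (Fin n → ZMod 2) → (Fin n → ZMod 2)) (hF : IsAPN F)
    (A B : (Fin n → ZMod 2) ≃ₗ[ZMod 2] (Fin n → ZMod 2))
    (h : ∀ x, F (A x) = B (F x))
    (hk : Module.finrank (ZMod 2) (fixSpace A) = 2)
    (hl : Module.finrank (ZMod 2) (fixSpace B) = 0) :
    False := by
  have hF0 : ∀ x ∈ fixSpace A, F x = 0 := fun x hx => by
    simpa [Submodule.finrank_eq_zero.mp hl] using map_mem_fixSpace_of_comm h hx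
  have hle := hF.finrank_le_one_of_eqOn_const (fixSpace A) 0 hF0
  omega
end

section
/- Let F : 𝔽₂ⁿ → 𝔽₂ⁿ be APN and let v be a nonzero vector and f : 𝔽₂ⁿ → 𝔽₂ a Boolean function. Define G(x) = F(x) + f(x)·v. Then G is APN if and only if for all x, y, a ∈ 𝔽₂ⁿ with F(x)+F(x+a)+F(y)+F(y+a) = v, we have f(x)+f(x+a)+f(y)+f(y+a) = 0. -/
/-!
Write `Δ_H(x, y, a) = H x + H (x + a) + H y + H (y + a)`. Since `x` and `x + a` always solve the
same derivative equation, `H` is APN iff `Δ_H(x, y, a) = 0` with `a ≠ 0` forces `y ∈ {x, x + a}`,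
where `Δ_H` vanishes identically. For `G = F + f • v` one has `Δ_G = Δ_F + Δ_f • v` with
`Δ_f ∈ {0, 1}`, so a solution of `Δ_G = 0` outside `{x, x + a}` is either a solution of `Δ_F = 0`
(impossible, `F` being APN) or a solution of `Δ_F = v` with `Δ_f = 1`.
-/

open Finset

section CharTwo

variable {V W : Type*} [AddCommGroup V] [Module (ZMod 2) V] [AddCommGroup W] [Module (ZMod 2) W]

theorem ZModModule.add_eq_zero_iff_eq {p q : W} : p + q = 0 ↔ p = q := by
  rw [← ZModModule.sub_eq_add, sub_eq_zero]

theorem ZModModule.add_add_self (x a : V) : x + a + a = x := by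
  rw [add_assoc, ZModModule.add_self, add_zero]

theorem fourSum_eq_zero_of_eq_or_eq_add (H : V → W) {x y a : V} (hy : y = x ∨ y = x + a) :
    H x + H (x + a) + H y + H (y + a) = 0 := by
  rcases hy with rfl | rfl
  · rw [add_assoc, ZModModule.add_self]
  · rw [ZModModule.add_add_self x a, add_assoc (H x), ZModModule.add_self, add_zero,
      ZModModule.add_self]

end CharTwo

theorem ZMod.eq_one_of_ne_zero {c : ZMod 2} (hc : c ≠ 0) : c = 1 := by
  revert c; decide

theorem fourSum_add_smul {R V W : Type*} [CommRing R] [AddCommGroup W] [Module R W] [Add V]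
    (F : V → W) (f : V → R) (v : W) (x y a : V) :
    F x + f x • v + (F (x + a) + f (x + a) • v) + (F y + f y • v) + (F (y + a) + f (y + a) • v)
      = F x + F (x + a) + F y + F (y + a) + (f x + f (x + a) + f y + f (y + a)) • v := by
  module

theorem isAPN_iff_fourSum {n : ℕ} {H : (Fin n → ZMod 2) → (Fin n → ZMod 2)} :
    IsAPN H ↔ ∀ a, a ≠ 0 → ∀ x y, H x + H (x + a) + H y + H (y + a) = 0 → y = x ∨ y = x + a := by
  constructor
  · intro hH a ha x y hxy
    by_contra! hy
    have hmem : ∀ z, H z + H (z + a) = H x + H (x + a) →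
        z ∈ univ.filter fun z => H z + H (z + a) = H x + H (x + a) := by simp
    have hx_ne : x ≠ x + a := fun h => ha (left_eq_add.mp h)
    refine (hH a ha (H x + H (x + a))).not_gt (two_lt_card.mpr ⟨x, hmem x rfl, x + a,
      hmem (x + a) ?_, y, hmem y ?_, hx_ne, hy.1.symm, hy.2.symm⟩)
    · rw [ZModModule.add_add_self, add_comm]
    · rw [← ZModModule.add_eq_zero_iff_eq, ← hxy, add_comm, ← add_assoc]
  · intro hH a ha b
    by_contra! hcard
    obtain ⟨p, hp, q, hq, r, hr, hpq, hpr, hqr⟩ := two_lt_card.mp hcard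
    simp only [mem_filter, mem_univ, true_and] at hp hq hr
    have hsol : ∀ z, H z + H (z + a) = b → z ≠ p → z = p + a := fun z hz hzp =>
      (hH a ha p z (by rw [add_assoc, hp, hz, ZModModule.add_self])).resolve_left hzp
    exact hqr ((hsol q hq hpq.symm).trans (hsol r hr hpr.symm).symm)

/-- switching construction of Edel and Pott: for APN `F`, nonzero `v` and a
Boolean function `f`, the function `G(x) = F(x) + f(x)·v` is APN iff whenever
`F(x)+F(x+a)+F(y)+F(y+a) = v` we have `f(x)+f(x+a)+f(y)+f(y+a) = 0`. -/
theorem switching_apn_iff {n : ℕ}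
    (F : (Fin n → ZMod 2) → (Fin n → ZMod 2)) (hF : IsAPN F)
    (v : Fin n → ZMod 2) (hv : v ≠ 0)
    (f : (Fin n → ZMod 2) → ZMod 2) :
    IsAPN (fun x => F x + f x • v) ↔
      ∀ x y a : Fin n → ZMod 2,
        F x + F (x + a) + F y + F (y + a) = v →
        f x + f (x + a) + f y + f (y + a) = 0 := by
  rw [isAPN_iff_fourSum] at hF ⊢
  simp only [fourSum_add_smul]
  constructor
  · intro hG x y a hFv
    have ha : a ≠ 0 := by
      rintro rfl
      simp only [add_zero, ZModModule.add_self, zero_add] at hFv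
      exact hv hFv.symm
    by_contra hf
    have hy := hG a ha x y (by
      rw [ZMod.eq_one_of_ne_zero hf, one_smul, hFv, ZModModule.add_self])
    exact hv (hFv.symm.trans (fourSum_eq_zero_of_eq_or_eq_add F hy))
  · intro hcond a ha x y hG
    have hf : f x + f (x + a) + f y + f (y + a) = 0 := by
      by_contra hf
      rw [ZMod.eq_one_of_ne_zero hf, one_smul, ZModModule.add_eq_zero_iff_eq] at hG
      exact hf (hcond x y a hG)
    rw [hf, zero_smul, add_zero] at hG
    exact hF a ha x y hG
end

section
/- Let F : 𝔽₂ⁿ → 𝔽₂ⁿ be a quadratic APN function. Then there exists a unique function Π_F : 𝔽₂ⁿ → 𝔽₂ⁿ with Π_F(0) = 0 such that for all nonzero α, Π_F(α) ≠ 0 and ⟨Π_F(α), F(x)+F(x+α)+F(α)+F(0)⟩ = 0 for all x. -/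
/-- `F` is quadratic: every derivative `x ↦ F(x) + F(x+a)` (`a ≠ 0`) is affine. -/
def IsQuadratic {n : ℕ} (F : (Fin n → ZMod 2) → (Fin n → ZMod 2)) : Prop :=
  ∀ a : Fin n → ZMod 2, a ≠ 0 →
    ∃ (L : (Fin n → ZMod 2) →ₗ[ZMod 2] (Fin n → ZMod 2)) (c : Fin n → ZMod 2),
      ∀ x, F x + F (x + a) = L x + c

/-!
For `α ≠ 0`, quadraticity makes `x ↦ F x + F (x + α) + F α + F 0` a linear map `L`. Its zeros
solve `F x + F (x + α) = F α + F 0`, so APN-ness leaves it only the kernel `{0, α}` and its image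
is a hyperplane. The vectors orthogonal to that image form the kernel of the transposed matrix,
whose dimension is that of `ker L`, namely one; over `𝔽₂` a line has exactly one nonzero vector.
-/

open Module LinearMap Matrix

theorem Matrix.mem_ker_vecMulLinear_iff {K m n : Type*} [CommRing K] [Fintype m] [Fintype n]
    (M : Matrix m n K) (v : m → K) :
    v ∈ ker M.vecMulLinear ↔ ∀ x, v ⬝ᵥ (M *ᵥ x) = 0 := by
  simp only [mem_ker, vecMulLinear_apply, dotProduct_mulVec, dotProduct_eq_zero_iff]

theorem Matrix.finrank_ker_vecMulLinear {K n : Type*} [Field K] [Fintype n]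
    (M : Matrix n n K) : finrank K (ker M.vecMulLinear) = finrank K (ker M.mulVecLin) := by
  have hM := finrank_range_add_finrank_ker M.mulVecLin
  have hMt := finrank_range_add_finrank_ker M.vecMulLinear
  rw [← mulVecLin_transpose] at hMt ⊢
  have := M.rank_transpose
  rw [rank, rank] at this
  omega

theorem Submodule.existsUnique_mem_ne_zero_of_finrank_eq_one {V : Type*} [AddCommGroup V]
    [Module (ZMod 2) V] {S : Submodule (ZMod 2) V} (hS : finrank (ZMod 2) S = 1) :
    ∃! v, v ∈ S ∧ v ≠ 0 := by
  obtain ⟨⟨v, hvS⟩, hv, hspan⟩ := finrank_eq_one_iff'.mp hS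
  refine ⟨v, ⟨hvS, by simpa using hv⟩, fun w ⟨hwS, hw⟩ => ?_⟩
  obtain ⟨c, hc⟩ := hspan ⟨w, hwS⟩
  replace hc : c • v = w := congrArg Subtype.val hc
  obtain rfl | rfl := (by decide : ∀ c : ZMod 2, c = 0 ∨ c = 1) c
  · exact absurd (by simpa using hc.symm) hw
  · simpa using hc.symm

theorem LinearMap.existsUnique_ne_zero_forall_dotProduct_eq_zero {ι : Type*} [Fintype ι]
    [DecidableEq ι] (L : (ι → ZMod 2) →ₗ[ZMod 2] (ι → ZMod 2))
    (hL : finrank (ZMod 2) (ker L) = 1) :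
    ∃! v, v ≠ 0 ∧ ∀ x, v ⬝ᵥ L x = 0 := by
  have hM : finrank (ZMod 2) (ker (toMatrix' L).vecMulLinear) = 1 := by
    rwa [finrank_ker_vecMulLinear, ← toLin'_apply', toLin'_toMatrix']
  simpa only [and_comm, mem_ker_vecMulLinear_iff, toMatrix'_mulVec] using
    Submodule.existsUnique_mem_ne_zero_of_finrank_eq_one hM

section Quadratic

variable {n : ℕ} {F : (Fin n → ZMod 2) → (Fin n → ZMod 2)} {α : Fin n → ZMod 2}

theorem IsQuadratic.exists_linearMap (hQ : IsQuadratic F) (hα : α ≠ 0) :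
    ∃ L : (Fin n → ZMod 2) →ₗ[ZMod 2] (Fin n → ZMod 2),
      ∀ x, F x + F (x + α) + F α + F 0 = L x := by
  obtain ⟨L, c, hL⟩ := hQ α hα
  have hc : F 0 + F α = c := by simpa using hL 0
  refine ⟨L, fun x => ?_⟩
  rw [hL, add_assoc, add_assoc, add_comm (F α), hc, ZModModule.add_self, add_zero]

theorem IsAPN.ker_eq_span {L : (Fin n → ZMod 2) →ₗ[ZMod 2] (Fin n → ZMod 2)} (hF : IsAPN F)
    (hα : α ≠ 0) (hL : ∀ x, F x + F (x + α) + F α + F 0 = L x) :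
    ker L = Submodule.span (ZMod 2) {α} := by
  classical
  have hα' : α ∈ ker L := by
    rw [mem_ker, ← hL, ZModModule.add_self, add_assoc, ZModModule.add_self]
  refine le_antisymm (fun z hz => ?_) ((Submodule.span_singleton_le_iff_mem _ _).mpr hα')
  by_contra hz'
  have hz0 : z ≠ 0 := by rintro rfl; exact hz' (zero_mem _)
  have hzα : z ≠ α := by rintro rfl; exact hz' (Submodule.mem_span_singleton_self z)
  have hroot : ∀ w ∈ ker L, F w + F (w + α) = F α + F 0 := fun w hw =>
    sub_eq_zero.mp (by rw [ZModModule.sub_eq_add, ← add_assoc, hL, hw])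
  have hsub : {0, α, z} ⊆ Finset.univ.filter fun x => F x + F (x + α) = F α + F 0 := by
    intro w hw
    simp only [Finset.mem_insert, Finset.mem_singleton] at hw
    rw [Finset.mem_filter]
    refine ⟨Finset.mem_univ w, hroot w ?_⟩
    rcases hw with rfl | rfl | rfl
    exacts [zero_mem _, hα', hz]
  have := (Finset.card_le_card hsub).trans (hF α hα (F α + F 0))
  rw [Finset.card_eq_three.mpr ⟨0, α, z, hα.symm, hz0.symm, hzα.symm, rfl⟩] at this
  omega

end Quadratic

theorem existsUnique_fun_map_zero_of_forall_ne_zero {α β : Type*} [Zero α] [Zero β]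
    {p : α → β → Prop} (h : ∀ a, a ≠ 0 → ∃! b, p a b) :
    ∃! f : α → β, f 0 = 0 ∧ ∀ a, a ≠ 0 → p a (f a) := by
  classical
  choose g hg hg_unique using h
  refine ⟨fun a => if ha : a = 0 then 0 else g a ha, ⟨dif_pos rfl, fun a ha => ?_⟩, ?_⟩
  · simpa only [dif_neg ha] using hg a ha
  · rintro f ⟨hf0, hf⟩
    funext a
    by_cases ha : a = 0
    · simp only [ha, hf0, dif_pos]
    · simpa only [dif_neg ha] using hg_unique a ha (f a) (hf a ha)

/-- existence and uniqueness of the ortho-derivative of a quadratic APN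
function: a unique `Π_F` with `Π_F(0)=0`, `Π_F(α) ≠ 0` for `α ≠ 0` and
`⟨Π_F(α), F(x)+F(x+α)+F(α)+F(0)⟩ = 0` for all `x`. -/
theorem ortho_derivative_exists_unique {n : ℕ}
    (F : (Fin n → ZMod 2) → (Fin n → ZMod 2))
    (hQ : IsQuadratic F) (hF : IsAPN F) :
    ∃! P : (Fin n → ZMod 2) → (Fin n → ZMod 2),
      P 0 = 0 ∧
      ∀ α : Fin n → ZMod 2, α ≠ 0 →
        P α ≠ 0 ∧
        ∀ x, (∑ i, P α i * (F x + F (x + α) + F α + F 0) i) = 0 := by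
  refine existsUnique_fun_map_zero_of_forall_ne_zero
    (p := fun α v => v ≠ 0 ∧ ∀ x, v ⬝ᵥ (F x + F (x + α) + F α + F 0) = 0) fun α hα => ?_
  obtain ⟨L, hL⟩ := hQ.exists_linearMap hα
  have hker : finrank (ZMod 2) (ker L) = 1 := by
    rw [hF.ker_eq_span hα hL, finrank_span_singleton hα]
  simpa only [hL] using L.existsUnique_ne_zero_forall_dotProduct_eq_zero hker
end

section
/- Let F : 𝔽₂ⁿ → 𝔽₂ⁿ be APN with F ∘ A = B ∘ F for invertible linear maps A, B with dim Fix(A) = k and dim Fix(B) = ℓ. If k ≥ 3 and ℓ < k, then F cannot be APN (contradiction): equivalently, if F is APN and k ≥ 3 then ℓ ≥ k. -/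
open Finset Module Function

theorem Finset.card_fiber_eq_of_mul_card_le {α β : Type*} [Fintype α] [Fintype β]
    [DecidableEq β] {f : α → β} {m : ℕ} (hle : ∀ b, #{x | f x = b} ≤ m)
    (hcard : m * Fintype.card β ≤ Fintype.card α) (b : β) : #{x | f x = b} = m := by
  have hsum : ∑ b, #{x | f x = b} = ∑ _b : β, m := by
    refine le_antisymm (sum_le_sum fun b _ => hle b) ?_
    rw [← card_eq_sum_card_fiberwise (fun _ _ => mem_univ _), sum_const, smul_eq_mul, card_univ,
      card_univ, mul_comm]
    exact hcard
  exact (sum_eq_sum_iff_of_le fun b _ => hle b).1 hsum b (mem_univ b)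

theorem Int.exists_odd_mul_of_sq_eq {ι : Type*} {I : Finset ι} {x : ι → ℤ} {s : ℤ}
    (hI : Odd #I) (hx : ∀ i ∈ I, x i ^ 2 = s ^ 2) : ∃ t, Odd t ∧ ∑ i ∈ I, x i = s * t := by
  have hx' : ∀ i ∈ I, x i = if x i = s then s else -s := fun i hi => by
    split_ifs with h
    · exact h
    · exact (sq_eq_sq_iff_eq_or_eq_neg.1 (hx i hi)).resolve_left h
  have hcard := card_filter_add_card_filter_not (s := I) fun i => x i = s
  obtain ⟨m, hm⟩ := hI
  refine ⟨#{i ∈ I | x i = s} - #{i ∈ I | ¬x i = s}, ⟨m - #{i ∈ I | ¬x i = s}, by omega⟩, ?_⟩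
  rw [sum_congr rfl hx', sum_ite, sum_const, sum_const, nsmul_eq_mul, nsmul_eq_mul]
  ring

theorem Int.not_two_pow_dvd_two_pow_add_sum {ι : Type*} {I : Finset ι} {x : ι → ℤ} {k : ℕ}
    (hk : 3 ≤ k) (hI : Odd #I) (hx : ∀ i ∈ I, x i ^ 2 = 2 ^ k) :
    ¬(2 : ℤ) ^ (k - 1) ∣ 2 ^ k + ∑ i ∈ I, x i := by
  obtain ⟨i₀, hi₀⟩ := card_pos.1 hI.pos
  obtain ⟨t, ht, hsum⟩ :=
    exists_odd_mul_of_sq_eq hI fun i hi => (hx i hi).trans (hx i₀ hi₀).symm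
  intro hdvd
  have hst : (2 : ℤ) ^ (k - 1) ∣ x i₀ * t := by
    rw [← hsum]
    exact (dvd_add_right (pow_dvd_pow 2 (Nat.sub_le k 1))).1 hdvd
  have hcop : IsCoprime ((2 : ℤ) ^ (k - 1)) t :=
    (Int.prime_two.coprime_iff_not_dvd.2 fun h =>
      Int.not_even_iff_odd.2 ht (even_iff_two_dvd.2 h)).pow_left
  have hs : (2 : ℤ) ^ (2 * (k - 1)) ∣ 2 ^ k := by
    rw [pow_mul', ← hx i₀ hi₀]
    exact pow_dvd_pow_of_dvd (hcop.dvd_of_dvd_mul_right hst) 2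
  have := (_root_.pow_dvd_pow_iff two_ne_zero Int.prime_two.not_isUnit).1 hs
  omega

def IsAPNMap {V W : Type*} [AddGroup V] [Fintype V] [AddGroup W] [DecidableEq W]
    (G : V → W) : Prop :=
  ∀ a : V, a ≠ 0 → ∀ b : W, #{x | G x + G (x + a) = b} ≤ 2

namespace IsAPNMap

variable {V W : Type*} [AddGroup V] [Fintype V] [AddGroup W] [DecidableEq W] {G : V → W}

theorem of_injective_of_comp_eq {V' W' : Type*} [AddGroup V'] [Fintype V'] [AddGroup W']
    [DecidableEq W'] {F : V' → W'} (hF : IsAPNMap F) {i : V →+ V'} (hi : Injective i)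
    {j : W →+ W'} (hFG : ∀ x, F (i x) = j (G x)) : IsAPNMap G := by
  intro a ha b
  refine (card_le_card_of_injOn i (fun x hx => ?_) hi.injOn).trans
    (hF (i a) ((map_ne_zero_iff i hi).2 ha) (j b))
  simp only [coe_filter, mem_univ, true_and, Set.mem_ofPred_eq] at hx ⊢
  rw [← map_add, hFG, hFG, ← map_add, hx]

theorem card_le [Nontrivial V] [Fintype W] (hG : IsAPNMap G) :
    Fintype.card V ≤ 2 * Fintype.card W := by
  obtain ⟨a, ha⟩ := exists_ne (0 : V)
  exact card_le_mul_card_image_of_maps_to (fun _ _ => mem_univ _) 2 fun b _ => hG a ha b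

end IsAPNMap

def signChar : AddChar (ZMod 2) ℤ := AddChar.zmodChar 2 (by norm_num : (-1 : ℤ) ^ 2 = 1)

theorem signChar_ne_one {c : ZMod 2} (hc : c ≠ 0) : signChar c ≠ 1 := by
  revert c
  decide

theorem sum_signChar_eq_zero {M : Type*} [AddGroup M] [Fintype M] {f : M →+ ZMod 2}
    (hf : f ≠ 0) : ∑ m, signChar (f m) = 0 := by
  obtain ⟨m, hm⟩ := DFunLike.ne_iff.1 hf
  exact AddChar.sum_eq_zero_of_ne_one (ψ := signChar.compAddMonoidHom f)
    (AddChar.ne_one_iff.2 ⟨m, signChar_ne_one hm⟩)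

theorem card_dual_eq_card (K W : Type*) [Field K] [Fintype K] [AddCommGroup W] [Module K W]
    [Fintype W] [Fintype (Dual K W)] : Fintype.card (Dual K W) = Fintype.card W := by
  rw [card_eq_pow_finrank (K := K), card_eq_pow_finrank (K := K) (V := W),
    Subspace.dual_finrank_eq]

theorem sum_dual_signChar {W : Type*} [AddCommGroup W] [Module (ZMod 2) W] [Fintype W]
    [DecidableEq W] [Fintype (Dual (ZMod 2) W)] (w : W) :
    ∑ ψ : Dual (ZMod 2) W, signChar (ψ w) = if w = 0 then (Fintype.card W : ℤ) else 0 := by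
  split_ifs with hw
  · simp [hw, card_dual_eq_card]
  · refine sum_signChar_eq_zero (f := (Dual.eval (ZMod 2) W w).toAddMonoidHom) fun h => hw ?_
    exact (forall_dual_apply_eq_zero_iff (ZMod 2) w).1 fun φ => DFunLike.congr_fun h φ

section Walsh

variable {V W : Type*} [Fintype V] [AddCommGroup W] [Module (ZMod 2) W]

def walsh (G : V → W) (ψ : Dual (ZMod 2) W) : ℤ := ∑ x, signChar (ψ (G x))

theorem walsh_zero (G : V → W) : walsh G 0 = Fintype.card V := by
  simp [walsh]

theorem sum_walsh [Fintype W] [DecidableEq W] [Fintype (Dual (ZMod 2) W)] (G : V → W) :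
    ∑ ψ, walsh G ψ = Fintype.card W * #{x | G x = 0} := by
  simp_rw [walsh]
  rw [sum_comm]
  simp_rw [sum_dual_signChar]
  rw [sum_ite, sum_const_zero, add_zero, sum_const, nsmul_eq_mul, mul_comm]

theorem walsh_sq [AddGroup V] (G : V → W) (ψ : Dual (ZMod 2) W) :
    walsh G ψ ^ 2 = ∑ a, ∑ x, signChar (ψ (G x + G (x + a))) := by
  simp_rw [sq, walsh, sum_mul_sum, ← AddChar.map_add_eq_mul, ← map_add]
  conv_rhs => rw [sum_comm]
  exact sum_congr rfl fun x _ =>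
    (Equiv.sum_comp (Equiv.addLeft x) fun y => signChar (ψ (G x + G y))).symm

theorem sum_signChar_eq_zero_of_card_fiber_eq [Fintype W] [DecidableEq W] {g : V → W} {c : ℕ}
    (hg : ∀ b, #{x | g x = b} = c) {ψ : Dual (ZMod 2) W} (hψ : ψ ≠ 0) :
    ∑ x, signChar (ψ (g x)) = 0 := by
  calc ∑ x, signChar (ψ (g x))
      = ∑ b, ∑ x with g x = b, signChar (ψ (g x)) := (sum_fiberwise univ g _).symm
    _ = ∑ b, (c : ℤ) * signChar (ψ b) := sum_congr rfl fun b _ => by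
        rw [sum_congr rfl fun x hx => by rw [(mem_filter.1 hx).2], sum_const, hg, nsmul_eq_mul]
    _ = 0 := by
        rw [← mul_sum]
        exact mul_eq_zero_of_right _ <| sum_signChar_eq_zero (f := ψ.toAddMonoidHom)
          fun h => hψ (LinearMap.toAddMonoidHom_injective h)

theorem walsh_sq_eq_card [AddGroup V] [Fintype W] [DecidableEq W] {G : V → W} {c : ℕ}
    (hbal : ∀ a, a ≠ 0 → ∀ b, #{x | G x + G (x + a) = b} = c) {ψ : Dual (ZMod 2) W}
    (hψ : ψ ≠ 0) : walsh G ψ ^ 2 = Fintype.card V := by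
  classical
  rw [walsh_sq, ← add_sum_erase _ _ (mem_univ 0),
    sum_eq_zero fun a ha => sum_signChar_eq_zero_of_card_fiber_eq (hbal a (ne_of_mem_erase ha)) hψ]
  simp [ZModModule.add_self]

end Walsh

theorem not_isAPNMap_of_card_eq {V W : Type*} [AddGroup V] [Fintype V] [AddCommGroup W]
    [Module (ZMod 2) W] [Fintype W] [DecidableEq W] {k : ℕ} (hk : 3 ≤ k)
    (hV : Fintype.card V = 2 ^ k) (hW : Fintype.card W = 2 ^ (k - 1)) (G : V → W) :
    ¬IsAPNMap G := by
  classical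
  intro hG
  have hbal : ∀ a, a ≠ 0 → ∀ b, #{x | G x + G (x + a) = b} = 2 := fun a ha =>
    card_fiber_eq_of_mul_card_le (hG a ha)
      (by rw [hV, hW, ← pow_succ', Nat.sub_add_cancel (by omega : 1 ≤ k)])
  have : Module.Finite (ZMod 2) W := Module.Finite.of_finite
  have : Finite (Dual (ZMod 2) W) := Module.finite_of_finite (ZMod 2)
  let _ : Fintype (Dual (ZMod 2) W) := Fintype.ofFinite _
  have hodd : Odd #(univ.erase (0 : Dual (ZMod 2) W)) := by
    rw [card_erase_of_mem (mem_univ _), card_univ, card_dual_eq_card, hW]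
    exact Nat.Even.sub_odd Nat.one_le_two_pow (Nat.even_pow.2 ⟨even_two, by omega⟩) odd_one
  have hinv := sum_walsh G
  rw [← add_sum_erase _ _ (mem_univ 0), walsh_zero, hV, hW] at hinv
  push_cast at hinv
  refine Int.not_two_pow_dvd_two_pow_add_sum hk hodd (x := walsh G) (fun ψ hψ => ?_) ⟨_, hinv⟩
  rw [walsh_sq_eq_card hbal (ne_of_mem_erase hψ), hV]
  norm_cast

theorem IsAPNMap.finrank_le {V W : Type*} [AddCommGroup V] [Module (ZMod 2) V] [Fintype V]
    [AddCommGroup W] [Module (ZMod 2) W] [Fintype W] [DecidableEq W] {G : V → W}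
    (hG : IsAPNMap G) (hk : 3 ≤ finrank (ZMod 2) V) :
    finrank (ZMod 2) V ≤ finrank (ZMod 2) W := by
  by_contra! hlt
  have : Nontrivial V := nontrivial_of_finrank_pos (R := ZMod 2) (by omega)
  have hV := card_eq_pow_finrank (K := ZMod 2) (V := V)
  have hW := card_eq_pow_finrank (K := ZMod 2) (V := W)
  rw [ZMod.card] at hV hW
  have hle := hG.card_le
  rw [hV, hW, ← pow_succ', Nat.pow_le_pow_iff_right one_lt_two] at hle
  exact not_isAPNMap_of_card_eq hk hV (by rw [hW]; congr 1; omega) G hG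

/-- if `F` is APN with `F ∘ A = B ∘ F` and `dim Fix(A) = k ≥ 3`,
then `dim Fix(B) ≥ k`. -/
theorem apn_fix_dim_ge {n : ℕ}
    (F : (Fin n → ZMod 2) → (Fin n → ZMod 2)) (hF : IsAPN F)
    (A B : (Fin n → ZMod 2) ≃ₗ[ZMod 2] (Fin n → ZMod 2))
    (h : ∀ x, F (A x) = B (F x))
    (hk : 3 ≤ Module.finrank (ZMod 2) (fixSpace A)) :
    Module.finrank (ZMod 2) (fixSpace A) ≤ Module.finrank (ZMod 2) (fixSpace B) := by
  classical
  have hmaps : ∀ x ∈ fixSpace A, F x ∈ fixSpace B := fun x (hx : A x = x) =>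
    show B (F x) = F x by rw [← h, hx]
  let G : fixSpace A → fixSpace B := fun x => ⟨F x, hmaps x x.2⟩
  have hG : IsAPNMap G := IsAPNMap.of_injective_of_comp_eq hF
    (i := (fixSpace A).subtype.toAddMonoidHom) Subtype.val_injective
    (j := (fixSpace B).subtype.toAddMonoidHom) fun _ => rfl
  exact hG.finrank_le hk
end
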